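/- Let (X,μ) be an infinite connected non-oriented weighted graph with bounded geometry and bounded row sums which is quasi-transitive: there is a finite partition of X such that for every pair x,y in the same class there is a bijection γ of X with γ(x) = y and μ(γ(a),γ(b)) = μ(a,b) for all a,b ∈ X. Fix p ∈ (0,1] and let ω be distributed as Bernoulli bond percolation on the edge set E(X) with parameter p. Then, almost surely, λ_s(Y^a_ω) := inf_{x∈X} r_ω(x) = R_μ. -/

import Mathlib

/-!
The percolated kernel is dominated by `μ`, and by connectivity
`limsup_n (μ^{(n)}(x,y))^{1/n}` does not depend on `x, y`; hence `λ_s(Y^a_ω) ≥ R_μ` for every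
configuration.

Conversely, fix `x₀` in an infinite class of the quasi-transitive partition. For each `n`,
bounded geometry yields infinitely many vertices of that class whose `n`-balls are pairwise
disjoint and contain a bounded number of edges. The events "every edge of the ball is open" are
then independent with probabilities bounded below, so by the second Borel–Cantelli lemma one of
them occurs almost surely. Inside a fully open ball the `n`-step return weight of the cluster is
at least `μ^{(n)}(x₀,x₀)`, and supermultiplicativity of return weights bounds its `n`-th root by
the limsup of the cluster; hence `λ_s(Y^a_ω) ≤ R_μ`.
-/

open Filter MeasureTheory ProbabilityTheory
open scoped ENNReal NNReal

/-- `n`-step weights (matrix powers) of a weight kernel `μ` on a countable set. -/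
noncomputable def matPow {X : Type*} [DecidableEq X] (μ : X → X → ℝ≥0∞) :
    ℕ → X → X → ℝ≥0∞
  | 0, x, y => if x = y then 1 else 0
  | n + 1, x, y => ∑' z, matPow μ n x z * μ z y

/-- `(X, μ)` has bounded row sums. -/
def bddRows {X : Type*} (μ : X → X → ℝ≥0∞) : Prop :=
  ∃ K : ℝ≥0∞, K ≠ ⊤ ∧ ∀ x, ∑' y, μ x y ≤ K

/-- `(X, μ)` is connected. -/
def connectedW {X : Type*} [DecidableEq X] (μ : X → X → ℝ≥0∞) : Prop :=
  ∀ x y, ∃ n, 0 < n ∧ 0 < matPow μ n x y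

/-- `limsup_n (μ^{(n)}(x,y))^{1/n}`, the reciprocal of the convergence parameter. -/
noncomputable def lsRoot {X : Type*} [DecidableEq X] (μ : X → X → ℝ≥0∞) (x y : X) : ℝ≥0∞ :=
  Filter.limsup (fun n : ℕ => matPow μ n x y ^ (n : ℝ)⁻¹) Filter.atTop

/-- The convergence parameter `R = 1 / limsup_n (μ^{(n)}(x,y))^{1/n}`. -/
noncomputable def convR {X : Type*} [DecidableEq X] (μ : X → X → ℝ≥0∞) (x y : X) : ℝ≥0∞ :=
  (lsRoot μ x y)⁻¹

open Classical in
/-- Restriction of a weight kernel to a subset (extended by `0`). -/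
noncomputable def restrictW {X : Type*} (μ : X → X → ℝ≥0∞) (A : Set X) : X → X → ℝ≥0∞ :=
  fun x y => if x ∈ A ∧ y ∈ A then μ x y else 0
/-- `e` is an edge of the weighted graph `(X, μ)`. -/
def IsEdgeW {X : Type*} (μ : X → X → ℝ≥0∞) (e : Sym2 X) : Prop :=
  ∃ x y : X, e = s(x, y) ∧ 0 < μ x y

open Classical in
/-- The weight kernel obtained from `μ` by keeping only the edges that are open in the
percolation configuration `c`. -/
noncomputable def percW {X : Type*} (μ : X → X → ℝ≥0∞)
    (c : {e : Sym2 X // IsEdgeW μ e} → Bool) : X → X → ℝ≥0∞ := fun x y =>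
  if h : IsEdgeW μ s(x, y) then (if c ⟨s(x, y), h⟩ then μ x y else 0) else 0

/-- The open cluster of `x` in the configuration `c`: all vertices reachable from `x`
through open edges. -/
def clusterW {X : Type*} [DecidableEq X] (μ : X → X → ℝ≥0∞)
    (c : {e : Sym2 X // IsEdgeW μ e} → Bool) (x : X) : Set X :=
  {y : X | ∃ n : ℕ, 0 < matPow (percW μ c) n x y}

/-- `(X, μ)` is non-oriented: `μ(x,y) > 0` iff `μ(y,x) > 0`. -/
def nonOrientedW {X : Type*} (μ : X → X → ℝ≥0∞) : Prop :=
  ∀ x y : X, 0 < μ x y ↔ 0 < μ y x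

/-- `(X, μ)` has bounded geometry: uniformly bounded number of neighbours. -/
def bddGeometryW {X : Type*} (μ : X → X → ℝ≥0∞) : Prop :=
  ∃ D : ℕ, ∀ x : X, ({y : X | 0 < μ x y}).Finite ∧ ({y : X | 0 < μ x y}).ncard ≤ D

/-- `(X, μ)` is quasi-transitive: a finite partition such that any two vertices in the
same class are exchanged by some `μ`-preserving bijection of `X`. -/
def quasiTransitiveW {X : Type*} (μ : X → X → ℝ≥0∞) : Prop :=
  ∃ (ι : Type) (_ : Finite ι) (cl : X → ι), ∀ x y : X, cl x = cl y →
    ∃ γ : X ≃ X, γ x = y ∧ ∀ a b : X, μ (γ a) (γ b) = μ a b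

open Function

section MatPow

variable {X : Type*} [DecidableEq X] {μ ν : X → X → ℝ≥0∞}

lemma matPow_zero_pos_iff {x y : X} : 0 < matPow μ 0 x y ↔ x = y := by
  simp only [matPow]
  split_ifs <;> simp_all

lemma matPow_succ_pos_iff {n : ℕ} {x y : X} :
    0 < matPow μ (n + 1) x y ↔ ∃ z, 0 < matPow μ n x z ∧ 0 < μ z y := by
  simp only [matPow, pos_iff_ne_zero, ne_eq, ENNReal.tsum_eq_zero, mul_eq_zero, not_forall,
    not_or]

lemma matPow_mono (h : ∀ x y, μ x y ≤ ν x y) (n : ℕ) (x y : X) :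
    matPow μ n x y ≤ matPow ν n x y := by
  induction n generalizing y with
  | zero => exact le_rfl
  | succ n ih => exact ENNReal.tsum_le_tsum fun z => mul_le_mul' (ih z) (h z y)

lemma matPow_add (μ : X → X → ℝ≥0∞) (m n : ℕ) (x y : X) :
    matPow μ (m + n) x y = ∑' z, matPow μ m x z * matPow μ n z y := by
  induction n generalizing y with
  | zero => simp [matPow]
  | succ n ih =>
    calc matPow μ (m + n + 1) x y
        = ∑' z, ∑' w, matPow μ m x w * matPow μ n w z * μ z y := by
          simp only [matPow, ih, ENNReal.tsum_mul_right]
      _ = ∑' w, matPow μ m x w * matPow μ (n + 1) w y := by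
          rw [ENNReal.tsum_comm]
          simp only [matPow, ← ENNReal.tsum_mul_left, mul_assoc]

lemma mul_matPow_le (μ : X → X → ℝ≥0∞) (m n : ℕ) (x z y : X) :
    matPow μ m x z * matPow μ n z y ≤ matPow μ (m + n) x y :=
  (matPow_add μ m n x y).symm ▸ ENNReal.le_tsum z

lemma matPow_pos_comm (hno : nonOrientedW μ) {n : ℕ} {x y : X}
    (h : 0 < matPow μ n x y) : 0 < matPow μ n y x := by
  induction n generalizing y with
  | zero => exact matPow_zero_pos_iff.2 (matPow_zero_pos_iff.1 h).symm
  | succ n ih =>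
    obtain ⟨z, hxz, hzy⟩ := matPow_succ_pos_iff.1 h
    have hyz : 0 < matPow μ 1 y z :=
      matPow_succ_pos_iff.2 ⟨y, matPow_zero_pos_iff.2 rfl, (hno z y).1 hzy⟩
    calc 0 < matPow μ 1 y z * matPow μ n z x := ENNReal.mul_pos hyz.ne' (ih hxz).ne'
      _ ≤ matPow μ (n + 1) y x := add_comm n 1 ▸ mul_matPow_le μ 1 n y z x

lemma matPow_equiv_apply (γ : X ≃ X) (hγ : ∀ a b, μ (γ a) (γ b) = μ a b) (n : ℕ) (a b : X) :
    matPow μ n (γ a) (γ b) = matPow μ n a b := by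
  induction n generalizing b with
  | zero => simp [matPow, γ.injective.eq_iff]
  | succ n ih =>
    simp only [matPow]
    rw [← γ.tsum_eq]
    simp only [ih, hγ]

end MatPow

lemma eventually_mul_pow_le_pow {M b b' : ℝ≥0∞} (hM : M ≠ ⊤) (hb : b < b') :
    ∀ᶠ n : ℕ in atTop, M * b ^ n ≤ b' ^ n := by
  rcases eq_or_ne b' ⊤ with rfl | hb'
  · filter_upwards [eventually_ge_atTop 1] with n hn
    simp [ENNReal.top_pow (Nat.one_le_iff_ne_zero.1 hn)]
  have hb'0 : b' ≠ 0 := (pos_of_gt hb).ne'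
  have hr : b / b' < 1 := (ENNReal.div_lt_iff (Or.inl hb'0) (Or.inl hb')).2 (by simpa using hb)
  have hlim : Tendsto (fun n : ℕ => M * (b / b') ^ n) atTop (nhds 0) := by
    simpa using ENNReal.Tendsto.const_mul (ENNReal.tendsto_pow_atTop_nhds_zero_of_lt_one hr)
      (Or.inr hM)
  filter_upwards [hlim.eventually_le_const zero_lt_one] with n hn
  calc M * b ^ n = M * (b / b') ^ n * b' ^ n := by
        rw [mul_assoc, ← mul_pow, ENNReal.div_mul_cancel hb'0 hb']
    _ ≤ b' ^ n := mul_le_of_le_one_left' hn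

lemma limsup_rpow_inv_le_of_le_mul_pow {u : ℕ → ℝ≥0∞} {M b : ℝ≥0∞} (hM : M ≠ ⊤)
    (h : ∀ᶠ n in atTop, u n ≤ M * b ^ n) :
    limsup (fun n : ℕ => u n ^ (n : ℝ)⁻¹) atTop ≤ b := by
  refine le_of_forall_gt_imp_ge_of_dense fun b' hb' => limsup_le_of_le (by isBoundedDefault) ?_
  filter_upwards [h, eventually_mul_pow_le_pow hM hb', eventually_gt_atTop 0] with n hu hb hn
  rw [ENNReal.rpow_inv_le_iff (by positivity), ENNReal.rpow_natCast]
  exact hu.trans hb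

lemma limsup_rpow_inv_le_of_mul_le_shift {u v : ℕ → ℝ≥0∞} {c : ℝ≥0∞} (hc : c ≠ 0) (k : ℕ)
    (h : ∀ n, c * u n ≤ v (n + k)) :
    limsup (fun n : ℕ => u n ^ (n : ℝ)⁻¹) atTop ≤
      limsup (fun n : ℕ => v n ^ (n : ℝ)⁻¹) atTop := by
  refine le_of_forall_gt_imp_ge_of_dense fun b hb => ?_
  rcases eq_or_ne b ⊤ with rfl | hbt
  · exact le_top
  have hv : ∀ᶠ n in atTop, v n ≤ b ^ n := by
    filter_upwards [eventually_lt_of_limsup_lt hb, eventually_gt_atTop 0] with n hn hn0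
    rw [ENNReal.rpow_inv_lt_iff (by positivity), ENNReal.rpow_natCast] at hn
    exact hn.le
  refine limsup_rpow_inv_le_of_le_mul_pow (M := b ^ k / c)
    (ENNReal.div_ne_top (by simp [hbt]) hc) ?_
  filter_upwards [(tendsto_add_atTop_nat k).eventually hv] with n (hn : v (n + k) ≤ b ^ (n + k))
  have hvn : v (n + k) ≠ ⊤ := ne_top_of_le_ne_top (by simp [hbt]) hn
  calc u n ≤ v (n + k) / c :=
        (ENNReal.le_div_iff_mul_le (Or.inl hc) (Or.inr hvn)).2 (mul_comm c _ ▸ h n)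
    _ ≤ b ^ (n + k) / c := by gcongr
    _ = b ^ k / c * b ^ n := by rw [pow_add, ENNReal.div_eq_inv_mul, ENNReal.div_eq_inv_mul]; ring

lemma rpow_inv_le_limsup_of_supermul {v : ℕ → ℝ≥0∞} (hv : ∀ a b, v a * v b ≤ v (a + b))
    {m : ℕ} (hm : m ≠ 0) :
    v m ^ (m : ℝ)⁻¹ ≤ limsup (fun n : ℕ => v n ^ (n : ℝ)⁻¹) atTop := by
  have hpow : ∀ j, v m ^ (j + 1) ≤ v ((j + 1) * m) := by
    intro j
    induction j with
    | zero => simp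
    | succ j ih =>
      calc v m ^ (j + 2) = v m ^ (j + 1) * v m := pow_succ _ _
        _ ≤ v ((j + 1) * m) * v m := by gcongr
        _ ≤ v ((j + 2) * m) := by convert hv _ _ using 2; ring
  refine le_limsup_of_frequently_le (frequently_atTop.2 fun N => ⟨(N + 1) * m, ?_, ?_⟩)
    (by isBoundedDefault)
  · nlinarith [Nat.one_le_iff_ne_zero.2 hm]
  · calc v m ^ (m : ℝ)⁻¹ = (v m ^ (N + 1)) ^ (((N + 1) * m : ℕ) : ℝ)⁻¹ := by
          rw [← ENNReal.rpow_natCast, ← ENNReal.rpow_mul]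
          congr 1
          push_cast
          field_simp
      _ ≤ v ((N + 1) * m) ^ (((N + 1) * m : ℕ) : ℝ)⁻¹ := by gcongr; exact hpow N

lemma limsup_le_iSup_succ (w : ℕ → ℝ≥0∞) : limsup w atTop ≤ ⨆ m, w (m + 1) := by
  rw [← limsup_nat_add w 1]
  exact limsup_le_iSup

section LsRoot

variable {X : Type*} [DecidableEq X] {μ ν : X → X → ℝ≥0∞}

lemma lsRoot_mono (h : ∀ x y, μ x y ≤ ν x y) (x y : X) : lsRoot μ x y ≤ lsRoot ν x y :=
  limsup_le_limsup (.of_forall fun n => ENNReal.rpow_le_rpow (matPow_mono h n x y) (by positivity))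

lemma lsRoot_le_of_matPow_pos_right {y z : X} {l : ℕ} (hl : 0 < matPow μ l y z) (x : X) :
    lsRoot μ x y ≤ lsRoot μ x z :=
  limsup_rpow_inv_le_of_mul_le_shift hl.ne' l fun n => mul_comm (matPow μ n x y) _ ▸
    mul_matPow_le μ n l x y z

lemma lsRoot_le_of_matPow_pos_left {x z : X} {l : ℕ} (hl : 0 < matPow μ l z x) (y : X) :
    lsRoot μ x y ≤ lsRoot μ z y :=
  limsup_rpow_inv_le_of_mul_le_shift hl.ne' l fun n => add_comm l n ▸ mul_matPow_le μ l n z x y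

lemma connectedW.lsRoot_eq (hconn : connectedW μ) (x y z w : X) :
    lsRoot μ x y = lsRoot μ z w := by
  have key : ∀ a b c d : X, lsRoot μ a b ≤ lsRoot μ c d := fun a b c d =>
    (lsRoot_le_of_matPow_pos_right (hconn b d).choose_spec.2 a).trans
      (lsRoot_le_of_matPow_pos_left (hconn c a).choose_spec.2 d)
  exact (key x y z w).antisymm (key z w x y)

lemma lsRoot_self_le_iSup_of_forall_exists_matPow_le {x : X}
    (h : ∀ n, ∃ z, matPow μ (n + 1) x x ≤ matPow ν (n + 1) z z) :
    lsRoot μ x x ≤ ⨆ z, lsRoot ν z z := by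
  refine (limsup_le_iSup_succ _).trans (iSup_le fun n => ?_)
  obtain ⟨z, hz⟩ := h n
  calc matPow μ (n + 1) x x ^ ((n + 1 : ℕ) : ℝ)⁻¹
      ≤ matPow ν (n + 1) z z ^ ((n + 1 : ℕ) : ℝ)⁻¹ := by gcongr
    _ ≤ lsRoot ν z z :=
        rpow_inv_le_limsup_of_supermul (fun a b => mul_matPow_le ν a b z z z) n.succ_ne_zero
    _ ≤ ⨆ z, lsRoot ν z z := le_iSup (fun z => lsRoot ν z z) z

end LsRoot

namespace bddGeometryW

variable {X : Type*} [DecidableEq X] {μ : X → X → ℝ≥0∞} (hbg : bddGeometryW μ)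

noncomputable def nbrs (x : X) : Finset X := (hbg.choose_spec x).1.toFinset

noncomputable def ball (x : X) : ℕ → Finset X
  | 0 => {x}
  | N + 1 => ball x N ∪ (ball x N).biUnion hbg.nbrs

variable {hbg}

lemma mem_ball {x w : X} {N : ℕ} : w ∈ hbg.ball x N ↔ ∃ i ≤ N, 0 < matPow μ i x w := by
  induction N generalizing w with
  | zero => simp [ball, matPow_zero_pos_iff, eq_comm]
  | succ N ih =>
    simp only [ball, Finset.mem_union, Finset.mem_biUnion, ih, nbrs, Set.Finite.mem_toFinset,
      Set.mem_ofPred_eq]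
    constructor
    · rintro (⟨i, hi, hpos⟩ | ⟨z, ⟨i, hi, hz⟩, hzw⟩)
      · exact ⟨i, by omega, hpos⟩
      · exact ⟨i + 1, by omega, matPow_succ_pos_iff.2 ⟨z, hz, hzw⟩⟩
    · rintro ⟨i, hi, hpos⟩
      obtain hi | rfl := hi.lt_or_eq
      · exact .inl ⟨i, by omega, hpos⟩
      · obtain ⟨z, hz, hzw⟩ := matPow_succ_pos_iff.1 hpos
        exact .inr ⟨z, ⟨N, le_rfl, hz⟩, hzw⟩

lemma card_ball_le (x : X) (N : ℕ) : (hbg.ball x N).card ≤ (hbg.choose + 1) ^ N := by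
  have hnbrs (z : X) : (hbg.nbrs z).card ≤ hbg.choose := by
    rw [← Set.ncard_coe_finset, nbrs, Set.Finite.coe_toFinset]
    exact (hbg.choose_spec z).2
  induction N with
  | zero => simp [ball]
  | succ N ih =>
    calc (hbg.ball x (N + 1)).card
        ≤ (hbg.ball x N).card + ∑ z ∈ hbg.ball x N, (hbg.nbrs z).card :=
          (Finset.card_union_le _ _).trans (add_le_add_right Finset.card_biUnion_le _)
      _ ≤ (hbg.ball x N).card * (hbg.choose + 1) := by
          grw [Finset.sum_le_card_nsmul _ _ _ fun z _ => hnbrs z]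
          rw [smul_eq_mul, mul_add_one, add_comm]
      _ ≤ (hbg.choose + 1) ^ (N + 1) := by rw [pow_succ]; gcongr

lemma mem_ball_comm (hno : nonOrientedW μ) {x w : X} {N : ℕ} :
    w ∈ hbg.ball x N → x ∈ hbg.ball w N := by
  simp only [mem_ball]
  exact fun ⟨i, hi, hpos⟩ => ⟨i, hi, matPow_pos_comm hno hpos⟩

lemma exists_seq_pairwise_disjoint_ball (hno : nonOrientedW μ) {C : Set X} (hC : C.Infinite)
    (N : ℕ) : ∃ y : ℕ → X, (∀ i, y i ∈ C) ∧ Pairwise (Disjoint on fun i => hbg.ball (y i) N) := by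
  have hfresh (s : Finset X) : ∃ z ∈ C, ∀ x ∈ s, Disjoint (hbg.ball x N) (hbg.ball z N) := by
    let S := (s.biUnion (hbg.ball · N)).biUnion (hbg.ball · N)
    obtain ⟨z, hzC, hzS⟩ := (hC.sdiff S.finite_toSet).nonempty
    refine ⟨z, hzC, fun x hx => Finset.disjoint_left.2 fun w hwx hwz => hzS ?_⟩
    simp only [S, Finset.coe_biUnion, Set.mem_iUnion, Finset.mem_coe]
    exact ⟨w, ⟨x, hx, hwx⟩, mem_ball_comm hno hwz⟩
  obtain ⟨y, hyC, hy⟩ := exists_seq_of_forall_finset_exists (· ∈ C)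
    (fun x z => Disjoint (hbg.ball x N) (hbg.ball z N)) fun s _ => hfresh s
  refine ⟨y, hyC, fun i j hij => ?_⟩
  rcases hij.lt_or_gt with h | h
  exacts [hy i j h, (hy j i h).symm]

end bddGeometryW

section Percolation

variable {X : Type*} {μ : X → X → ℝ≥0∞}

open Classical in
noncomputable def edgesIn (μ : X → X → ℝ≥0∞) (A : Finset X) : Finset {e : Sym2 X // IsEdgeW μ e} :=
  A.sym2.subtype (IsEdgeW μ)

lemma mem_edgesIn {A : Finset X} {e : {e : Sym2 X // IsEdgeW μ e}} :
    e ∈ edgesIn μ A ↔ ∀ v ∈ e.val, v ∈ A := by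
  simp [edgesIn, Finset.mem_sym2_iff]

lemma card_edgesIn_le (A : Finset X) : (edgesIn μ A).card ≤ (A.card + 1).choose 2 := by
  classical
  rw [← Finset.card_sym2, edgesIn, Finset.card_subtype]
  exact Finset.card_filter_le _ _

lemma disjoint_edgesIn {A B : Finset X} (h : Disjoint A B) :
    Disjoint (edgesIn μ A) (edgesIn μ B) := by
  refine Finset.disjoint_left.2 fun e hA hB => ?_
  obtain ⟨u, v, he, -⟩ := e.2
  have hu : u ∈ e.val := he ▸ Sym2.mem_mk_left u v
  exact Finset.disjoint_left.1 h (mem_edgesIn.1 hA u hu) (mem_edgesIn.1 hB u hu)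

lemma percW_le (c : {e : Sym2 X // IsEdgeW μ e} → Bool) (x y : X) : percW μ c x y ≤ μ x y := by
  unfold percW
  split_ifs <;> simp

lemma percW_eq_of_forall_edgesIn {c : {e : Sym2 X // IsEdgeW μ e} → Bool} {A : Finset X}
    (hopen : ∀ e ∈ edgesIn μ A, c e = true) {x y : X} (hx : x ∈ A) (hy : y ∈ A) :
    percW μ c x y = μ x y := by
  unfold percW
  split_ifs with hE hc
  · rfl
  · refine absurd (hopen _ (mem_edgesIn.2 fun v hv => ?_)) hc
    rcases Sym2.mem_iff.1 hv with rfl | rfl <;> assumption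
  · exact (nonpos_iff_eq_zero.1 (not_lt.1 fun h => hE ⟨x, y, rfl, h⟩)).symm

lemma matPow_le_matPow_percW [DecidableEq X] {c : {e : Sym2 X // IsEdgeW μ e} → Bool}
    {A : Finset X} (hopen : ∀ e ∈ edgesIn μ A, c e = true) {x : X} {N : ℕ}
    (hA : ∀ i ≤ N, ∀ w, 0 < matPow μ i x w → w ∈ A) :
    ∀ n ≤ N, ∀ y, matPow μ n x y ≤ matPow (percW μ c) n x y := by
  intro n
  induction n with
  | zero => exact fun _ _ => le_rfl
  | succ n ih =>
    intro hn y
    refine ENNReal.tsum_le_tsum fun z => ?_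
    rcases eq_or_ne (matPow μ n x z) 0 with hz | hz
    · simp [hz]
    rcases eq_or_ne (μ z y) 0 with hzy | hzy
    · simp [hzy]
    have hzA := hA n (by omega) z (pos_iff_ne_zero.2 hz)
    have hyA := hA (n + 1) hn y
      (matPow_succ_pos_iff.2 ⟨z, pos_iff_ne_zero.2 hz, pos_iff_ne_zero.2 hzy⟩)
    rw [percW_eq_of_forall_edgesIn hopen hzA hyA]
    exact mul_le_mul_left (ih (by omega) z) _

lemma bddGeometryW.exists_card_edgesIn_ball_le [DecidableEq X] (hbg : bddGeometryW μ) (N : ℕ) :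
    ∃ B, ∀ x, (edgesIn μ (hbg.ball x N)).card ≤ B :=
  ⟨((hbg.choose + 1) ^ N + 1).choose 2, fun x => (card_edgesIn_le _).trans
    (Nat.choose_le_choose 2 (Nat.add_le_add_right (hbg.card_ball_le x N) 1))⟩

lemma bddGeometryW.matPow_le_matPow_percW_ball [DecidableEq X] {hbg : bddGeometryW μ}
    {c : {e : Sym2 X // IsEdgeW μ e} → Bool} {x : X} {N : ℕ}
    (hopen : ∀ e ∈ edgesIn μ (hbg.ball x N), c e = true) (y : X) :
    matPow μ N x y ≤ matPow (percW μ c) N x y :=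
  matPow_le_matPow_percW hopen (fun i hi _ hw => mem_ball.2 ⟨i, hi, hw⟩) N le_rfl y

lemma connectedW.iInf_convR_percW_eq [DecidableEq X] (hconn : connectedW μ)
    {c : {e : Sym2 X // IsEdgeW μ e} → Bool} {x₀ : X}
    (h : ∀ n, ∃ z, matPow μ (n + 1) x₀ x₀ ≤ matPow (percW μ c) (n + 1) z z) (x y : X) :
    ⨅ z, convR (percW μ c) z z = convR μ x y := by
  have hsup : ⨆ z, lsRoot (percW μ c) z z = lsRoot μ x y :=
    (iSup_le fun z => (lsRoot_mono (percW_le c) z z).trans_eq (hconn.lsRoot_eq z z x y)).antisymm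
      ((hconn.lsRoot_eq x y x₀ x₀).trans_le (lsRoot_self_le_iSup_of_forall_exists_matPow_le h))
  simp only [convR, ← ENNReal.inv_iSup, hsup]

end Percolation

section Bernoulli

variable {E Ω : Type*} {Y : Ω → E → Bool} {p : ℝ≥0∞}

def allOpen (Y : Ω → E → Bool) (S : Finset E) : Set Ω := ⋂ e ∈ S, {a | Y a e = true}

@[simp]
lemma mem_allOpen {S : Finset E} {a : Ω} : a ∈ allOpen Y S ↔ ∀ e ∈ S, Y a e = true := by
  simp [allOpen]

variable [MeasureSpace Ω]

lemma measurableSet_allOpen (hmeas : ∀ e, Measurable fun a => Y a e) (S : Finset E) :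
    MeasurableSet (allOpen Y S) :=
  .biInter S.countable_toSet fun e _ => hmeas e (measurableSet_singleton true)

lemma measure_allOpen (hindep : iIndepFun (fun e a => Y a e) ℙ)
    (hber : ∀ e, ℙ {a | Y a e = true} = p) (S : Finset E) : ℙ (allOpen Y S) = p ^ S.card := by
  rw [allOpen, hindep.meas_biInter (s := fun e => {a | Y a e = true})
    fun e _ => ⟨{true}, measurableSet_singleton true, rfl⟩,
    Finset.prod_congr rfl fun e _ => hber e, Finset.prod_const]

lemma iIndepSet_allOpen (hmeas : ∀ e, Measurable fun a => Y a e)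
    (hindep : iIndepFun (fun e a => Y a e) ℙ) (hber : ∀ e, ℙ {a | Y a e = true} = p)
    {S : ℕ → Finset E} (hS : Pairwise (Disjoint on S)) :
    iIndepSet (fun i => allOpen Y (S i)) ℙ := by
  classical
  refine (iIndepSet_iff_meas_biInter fun i => measurableSet_allOpen hmeas (S i)).2 fun T => ?_
  have hT : ⋂ i ∈ T, allOpen Y (S i) = allOpen Y (T.biUnion S) :=
    (Finset.set_biInter_biUnion T S _).symm
  rw [hT, measure_allOpen hindep hber, Finset.card_biUnion fun i _ j _ hij => hS hij,
    ← Finset.prod_pow_eq_pow_sum]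
  exact Finset.prod_congr rfl fun i _ => (measure_allOpen hindep hber (S i)).symm

lemma ae_exists_allOpen (hmeas : ∀ e, Measurable fun a => Y a e)
    (hindep : iIndepFun (fun e a => Y a e) ℙ) (hber : ∀ e, ℙ {a | Y a e = true} = p)
    (hp0 : p ≠ 0) (hp1 : p ≤ 1) {S : ℕ → Finset E} (hS : Pairwise (Disjoint on S)) {B : ℕ}
    (hB : ∀ i, (S i).card ≤ B) : ∀ᵐ a ∂ℙ, ∃ i, a ∈ allOpen Y (S i) := by
  have := hindep.isProbabilityMeasure
  have hsum : ∑' i, ℙ (allOpen Y (S i)) = ⊤ := by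
    refine top_unique ((ENNReal.tsum_const_eq_top_of_ne_zero (pow_ne_zero B hp0)).symm.le.trans
      (ENNReal.tsum_le_tsum fun i => ?_))
    rw [measure_allOpen hindep hber]
    exact pow_le_pow_of_le_one zero_le hp1 (hB i)
  have hlimsup := measure_limsup_eq_one (fun i => measurableSet_allOpen hmeas (S i))
    (iIndepSet_allOpen hmeas hindep hber hS) hsum
  have hU : ℙ (⋃ i, allOpen Y (S i)) = 1 :=
    le_antisymm prob_le_one (hlimsup ▸ measure_mono limsup_le_iSup)
  rw [← prob_compl_eq_zero_iff (.iUnion fun i => measurableSet_allOpen hmeas (S i))] at hU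
  exact measure_mono_null (fun a ha => by simpa using ha) hU

end Bernoulli

theorem percolation_quasiTransitive_strong_critical_parameter_general
    {X : Type*} [Infinite X] [DecidableEq X]
    (μ : X → X → ℝ≥0∞) (hconn : connectedW μ)
    (hno : nonOrientedW μ) (hbg : bddGeometryW μ) (hqt : quasiTransitiveW μ)
    (p : ℝ≥0∞) (hp0 : 0 < p) (hp1 : p ≤ 1)
    {Ω : Type*} [MeasureSpace Ω]
    (Y : Ω → {e : Sym2 X // IsEdgeW μ e} → Bool)
    (hmeas : ∀ e, Measurable fun a => Y a e)
    (hindep : iIndepFun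
      (fun (e : {e : Sym2 X // IsEdgeW μ e}) a => Y a e) ℙ)
    (hber : ∀ e, ℙ {a | Y a e = true} = p) :
    ∀ᵐ a ∂ℙ, ∀ x y : X,
      (⨅ z : X, convR (percW μ (Y a)) z z) = convR μ x y := by
  obtain ⟨ι, _, cl, hcl⟩ := hqt
  obtain ⟨c₀, hc₀⟩ := Finite.exists_infinite_fiber cl
  have hC := Set.infinite_coe_iff.1 hc₀
  obtain ⟨x₀, hx₀⟩ := hC.nonempty
  choose y hyC hy using fun m => hbg.exists_seq_pairwise_disjoint_ball hno hC (m + 1)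
  have hopen : ∀ᵐ a ∂ℙ, ∀ m, ∃ i, a ∈ allOpen Y (edgesIn μ (hbg.ball (y m i) (m + 1))) :=
    ae_all_iff.2 fun m => ae_exists_allOpen hmeas hindep hber hp0.ne' hp1
      (fun i j hij => disjoint_edgesIn (hy m hij))
      fun i => (hbg.exists_card_edgesIn_ball_le (m + 1)).choose_spec (y m i)
  filter_upwards [hopen] with a ha x x'
  refine hconn.iInf_convR_percW_eq (x₀ := x₀) (fun m => ?_) x x'
  obtain ⟨i, hi⟩ := ha m
  obtain ⟨γ, hγ, hγμ⟩ := hcl x₀ (y m i) (hx₀.trans (hyC m i).symm)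
  refine ⟨y m i, ?_⟩
  calc matPow μ (m + 1) x₀ x₀ = matPow μ (m + 1) (y m i) (y m i) := by
        rw [← hγ, matPow_equiv_apply γ hγμ]
    _ ≤ _ := bddGeometryW.matPow_le_matPow_percW_ball (mem_allOpen.1 hi) _

/-- Theorem 7.1 (2): for a quasi-transitive infinite graph and any
`p ∈ (0,1]`, the strong critical parameter of the Bernoulli(`p`)-percolated graph
`λ_s(Y^a_ω) = inf_x r_ω(x)` equals `R_μ` almost surely. -/
theorem percolation_quasiTransitive_strong_critical_parameter
    {X : Type*} [Countable X] [Infinite X] [DecidableEq X]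
    (μ : X → X → ℝ≥0∞) (hbdd : bddRows μ) (hconn : connectedW μ)
    (hno : nonOrientedW μ) (hbg : bddGeometryW μ) (hqt : quasiTransitiveW μ)
    (p : ℝ≥0∞) (hp0 : 0 < p) (hp1 : p ≤ 1)
    {Ω : Type*} [MeasureSpace Ω] [IsProbabilityMeasure (ℙ : Measure Ω)]
    (Y : Ω → {e : Sym2 X // IsEdgeW μ e} → Bool)
    (hmeas : ∀ e, Measurable fun a => Y a e)
    (hindep : iIndepFun
      (fun (e : {e : Sym2 X // IsEdgeW μ e}) a => Y a e) ℙ)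
    (hber : ∀ e, ℙ {a | Y a e = true} = p) :
    ∀ᵐ a ∂ℙ, ∀ x y : X,
      (⨅ z : X, convR (percW μ (Y a)) z z) = convR μ x y :=
  percolation_quasiTransitive_strong_critical_parameter_general μ hconn hno hbg hqt p hp0 hp1 Y
    hmeas hindep hber
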